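/- Let R be a commutative ring (with 1) and M an R-module that is finitely generated and free as an R-module, carrying a module structure over a (not necessarily commutative) associative R-algebra A. Let R be a domain with fraction field K and suppose \bar{K} ⊗ M is an irreducible (\bar{K} ⊗ A)-module. Then there exists a nonzero r ∈ R such that for every prime p ∈ Spec(R[1/r]), the module \bar{K_p} ⊗ M is an irreducible (\bar{K_p} ⊗ A)-module, where K_p = Frac(R/p). -/

import Mathlib

/-!
By Burnside's theorem, `K̄ ⊗ M` is irreducible exactly when the operators `1 ⊗ a` span
`End_K̄(K̄ ⊗ M)`. As `M` is free of rank `n`, `End_R(M)` is free of rank `n²` and base-changes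
to `End_L(L ⊗ M)` for every field `L` over `R`, so spanning is detected by a determinant: the
operators `1 ⊗ a` span over `L` if and only if the image in `L` of `det(a₁, …, a_{n²})`, computed
in an `R`-basis of `End_R(M)`, is nonzero for some `a₁, …, a_{n²} ∈ A`. Irreducibility over `K̄`
gives such a tuple with `r = det(a₁, …, a_{n²}) ≠ 0`, and for every prime `p ∌ r` the image of `r`
in `K̄_p` is nonzero, so the operators span over `K̄_p` and `K̄_p ⊗ M` is irreducible.
-/

open scoped TensorProduct

universe u

section

variable {R : Type u} [CommRing R] (A : Type u) [Ring A] [Algebra R A]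
variable (M : Type u) [AddCommGroup M] [Module R M] [Module A M] [IsScalarTower R A M]

/-- The action of `a : A` on `M` as an `R`-linear endomorphism. -/
def actMap (a : A) : M →ₗ[R] M where
  toFun m := a • m
  map_add' := smul_add a
  map_smul' r m := (smul_comm r a m).symm

/-- `S ⊗ M` is an irreducible `S ⊗ A`-module: it is nonzero, and the only `S`-subspaces stable
under all operators `1 ⊗ a`, `a : A`, are `0` and everything. -/
def IsIrreducibleBaseChange (S : Type u) [CommRing S] [Algebra R S] : Prop :=
  Nontrivial (S ⊗[R] M) ∧
    ∀ W : Submodule S (S ⊗[R] M),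
      (∀ (a : A) (w : S ⊗[R] M), w ∈ W → LinearMap.lTensor S (actMap A M a) w ∈ W) →
      W = ⊥ ∨ W = ⊤

end

open Module

section Burnside

variable {K V : Type*} [Field K] [AddCommGroup V] [Module K V]

theorem Subalgebra.isSimpleModule_of_forall_invariant (B : Subalgebra K (End K V))
    [Nontrivial V] (hB : ∀ W : Submodule K V, (∀ f ∈ B, ∀ w ∈ W, f w ∈ W) → W = ⊥ ∨ W = ⊤) :
    IsSimpleModule B V := by
  refine (isSimpleModule_iff _ _).2 ⟨fun N => ?_⟩
  rcases hB (N.restrictScalars K) fun f hf w hw => N.smul_mem ⟨f, hf⟩ hw with h | h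
  · exact Or.inl ((Submodule.restrictScalars_eq_bot_iff K B V).1 h)
  · exact Or.inr ((Submodule.restrictScalars_eq_top_iff K B V).1 h)

/-- **Burnside's theorem**. -/
theorem Subalgebra.eq_top_of_forall_invariant [IsAlgClosed K] [FiniteDimensional K V]
    [Nontrivial V] (B : Subalgebra K (End K V))
    (hB : ∀ W : Submodule K V, (∀ f ∈ B, ∀ w ∈ W, f w ∈ W) → W = ⊥ ∨ W = ⊤) : B = ⊤ := by
  have := B.isSimpleModule_of_forall_invariant hB
  have : Module.Finite (End B V) V := Module.Finite.of_restrictScalars_finite K _ _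
  -- Schur: `End_B V = K`, so every `K`-linear map commutes with `End_B V`; conclude by density.
  have hschur := IsSimpleModule.algebraMap_end_bijective_of_isAlgClosed (A := B) (V := V) K
  refine eq_top_iff.2 fun f _ => ?_
  let g : End (End B V) V :=
    { f with
      map_smul' φ v := by
        obtain ⟨c, rfl⟩ := hschur.2 φ
        simp }
  obtain ⟨b, hb⟩ := Module.Finite.toModuleEnd_moduleEnd_surjective (R := B) (M := V) g
  have : (b : End K V) = f := LinearMap.ext fun v => congr($hb v)
  exact this ▸ b.2

theorem Submodule.span_le_compatibleMaps {S : Set (End K V)} {W : Submodule K V}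
    (hW : ∀ f ∈ S, ∀ w ∈ W, f w ∈ W) : span K S ≤ compatibleMaps W W :=
  span_le.2 fun f hf w hw => hW f hf w hw

theorem Submodule.eq_bot_or_eq_top_of_span_eq_top [Nontrivial V] {S : Set (End K V)}
    (hS : span K S = ⊤) (W : Submodule K V) (hW : ∀ f ∈ S, ∀ w ∈ W, f w ∈ W) :
    W = ⊥ ∨ W = ⊤ := by
  let W' : Submodule (End K V) V :=
    { W with smul_mem' f w hw := span_le_compatibleMaps hW (hS ▸ mem_top) hw }
  rcases eq_bot_or_eq_top W' with h | h
  · exact Or.inl (SetLike.coe_injective congr(($h : Set V)))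
  · exact Or.inr (SetLike.coe_injective congr(($h : Set V)))

theorem Submonoid.span_eq_top_of_forall_invariant [IsAlgClosed K] [FiniteDimensional K V]
    [Nontrivial V] (S : Submonoid (End K V))
    (hS : ∀ W : Submodule K V, (∀ f ∈ S, ∀ w ∈ W, f w ∈ W) → W = ⊥ ∨ W = ⊤) :
    Submodule.span K (S : Set (End K V)) = ⊤ := by
  have hspan : Subalgebra.toSubmodule (Algebra.adjoin K (S : Set (End K V))) =
      Submodule.span K S := by
    rw [Algebra.adjoin_eq_span, Submonoid.closure_eq]
  rw [← hspan, Subalgebra.eq_top_of_forall_invariant _ fun W hW => hS W fun f hf =>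
    hW f (Algebra.subset_adjoin hf), Algebra.top_toSubmodule]

end Burnside

namespace IsBaseChange

variable {R S N P : Type*} [CommRing R] [AddCommGroup N] [Module R N] [AddCommMonoid P]
  [Module R P] {κ : Type*} (β : Basis κ R N)

theorem basis_toMatrix_comp [CommSemiring S] [Algebra R S] [Module S P] [IsScalarTower R S P]
    {f : N →ₗ[R] P} (hf : IsBaseChange S f) {ι : Type*} (v : ι → N) :
    (hf.basis β).toMatrix (f ∘ v) = (β.toMatrix v).map (algebraMap R S) := by
  ext i j
  exact hf.basis_repr_comp_apply β (v j) i

theorem span_range_eq_top_iff_exists_det_ne_zero [Fintype κ] [DecidableEq κ] [Field S]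
    [Algebra R S] [Module S P] [IsScalarTower R S P] {f : N →ₗ[R] P} (hf : IsBaseChange S f)
    {α : Type*} (x : α → N) :
    Submodule.span S (Set.range (f ∘ x)) = ⊤ ↔
      ∃ c : κ → α, algebraMap R S (β.det (x ∘ c)) ≠ 0 := by
  let := Module.addCommMonoidToAddCommGroup S (M := P)
  have hdet (c : κ → α) : (hf.basis β).det (f ∘ x ∘ c) = algebraMap R S (β.det (x ∘ c)) := by
    rw [Basis.det_apply, Basis.det_apply, RingHom.map_det, RingHom.mapMatrix_apply,
      ← basis_toMatrix_comp β hf]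
  constructor
  · intro hspan
    obtain ⟨ι, a, -, hspan_a, hli⟩ := exists_linearIndependent' S (f ∘ x)
    let b := Basis.mk hli (hspan_a.trans hspan).ge
    let e := b.indexEquiv (hf.basis β)
    refine ⟨a ∘ e.symm, ?_⟩
    have hb : f ∘ x ∘ a ∘ e.symm = b.reindex e := by
      ext k
      simp [b]
    rw [← hdet, hb]
    exact ((hf.basis β).isUnit_det _).ne_zero
  · rintro ⟨c, hc⟩
    rw [← hdet, ← isUnit_iff_ne_zero, ← Basis.is_basis_iff_det] at hc
    exact eq_top_mono (Submodule.span_mono (Set.range_comp_subset_range c (f ∘ x))) hc.2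

theorem endHom_tensorProduct {M : Type*} [AddCommGroup M] [Module R M] [CommSemiring S]
    [Algebra R S] (g : End R M) : (TensorProduct.isBaseChange R M S).endHom g = g.baseChange S :=
  (TensorProduct.isBaseChange R M S).algHom_ext _ _ fun m =>
    IsBaseChange.endHom_comp_apply _ g m

end IsBaseChange

section

variable {R : Type u} [CommRing R] (A : Type u) [Ring A] [Algebra R A]
variable (M : Type u) [AddCommGroup M] [Module R M] [Module A M] [IsScalarTower R A M]

variable (R) in
noncomputable def baseChangeAction (L : Type*) [CommRing L] [Algebra R L] :
    A →ₐ[R] End L (L ⊗[R] M) :=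
  (End.baseChangeHom R L M).comp (Algebra.lsmul R R M)

theorem baseChangeAction_apply (L : Type*) [CommRing L] [Algebra R L] (a : A) :
    ⇑(baseChangeAction R A M L a) = LinearMap.lTensor L (actMap A M a) :=
  LinearMap.baseChange_eq_ltensor _

theorem isIrreducibleBaseChange_of_span_eq_top (L : Type u) [Field L] [Algebra R L]
    [Nontrivial (L ⊗[R] M)]
    (h : Submodule.span L (Set.range (baseChangeAction R A M L)) = ⊤) :
    IsIrreducibleBaseChange (R := R) A M L := by
  refine ⟨‹_›, fun W hW => W.eq_bot_or_eq_top_of_span_eq_top h ?_⟩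
  rintro _ ⟨a, rfl⟩ w hw
  rw [baseChangeAction_apply]
  exact hW a w hw

theorem IsIrreducibleBaseChange.span_eq_top (L : Type u) [Field L] [IsAlgClosed L] [Algebra R L]
    [FiniteDimensional L (L ⊗[R] M)] (h : IsIrreducibleBaseChange (R := R) A M L) :
    Submodule.span L (Set.range (baseChangeAction R A M L)) = ⊤ := by
  have := h.1
  rw [← AlgHom.coe_toMonoidHom, ← MonoidHom.coe_mrange]
  refine Submonoid.span_eq_top_of_forall_invariant _ fun W hW => h.2 W fun a w hw => ?_
  rw [← baseChangeAction_apply]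
  exact hW _ ⟨a, rfl⟩ w hw

theorem span_baseChangeAction_eq_top_iff (L : Type*) [Field L] [Algebra R L] [Free R M]
    [Module.Finite R M] {κ : Type*} [Fintype κ] [DecidableEq κ] (β : Basis κ R (End R M)) :
    Submodule.span L (Set.range (baseChangeAction R A M L)) = ⊤ ↔
      ∃ c : κ → A, algebraMap R L (β.det (Algebra.lsmul R R M ∘ c)) ≠ 0 := by
  have hcomp : (TensorProduct.isBaseChange R M L).endHom ∘ Algebra.lsmul R R M =
      baseChangeAction R A M L :=
    funext fun a => IsBaseChange.endHom_tensorProduct _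
  rw [← hcomp]
  exact (TensorProduct.isBaseChange R M L).end.span_range_eq_top_iff_exists_det_ne_zero β _

/-- Let `R` be a domain with fraction field `K`, `A` an associative `R`-algebra and `M` an
`A`-module which is finitely generated and free as an `R`-module.  If `K̄ ⊗ M` is an irreducible
`K̄ ⊗ A`-module, then there is a nonzero `r ∈ R` such that `K̄_p ⊗ M` is an irreducible
`K̄_p ⊗ A`-module for every prime `p` of `R[1/r]` (i.e. every prime of `R` with `r ∉ p`), where
`K_p = Frac(R/p)`. -/
theorem irreducible_on_dense_open [IsDomain R] [Module.Finite R M] [Module.Free R M]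
    (hirr :
      letI : Algebra R (AlgebraicClosure (FractionRing R)) :=
        ((algebraMap (FractionRing R) (AlgebraicClosure (FractionRing R))).comp
          (algebraMap R (FractionRing R))).toAlgebra
      IsIrreducibleBaseChange (R := R) A M (AlgebraicClosure (FractionRing R))) :
    ∃ r : R, r ≠ 0 ∧ ∀ (p : Ideal R) [p.IsPrime], r ∉ p →
      letI : Algebra R (AlgebraicClosure (FractionRing (R ⧸ p))) :=
        ((algebraMap (FractionRing (R ⧸ p)) (AlgebraicClosure (FractionRing (R ⧸ p)))).comp
          ((algebraMap (R ⧸ p) (FractionRing (R ⧸ p))).comp (Ideal.Quotient.mk p))).toAlgebra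
      IsIrreducibleBaseChange (R := R) A M (AlgebraicClosure (FractionRing (R ⧸ p))) := by
  let : Algebra R (AlgebraicClosure (FractionRing R)) :=
    ((algebraMap (FractionRing R) (AlgebraicClosure (FractionRing R))).comp
      (algebraMap R (FractionRing R))).toAlgebra
  have : Nontrivial M := (subsingleton_or_nontrivial M).resolve_left fun _ =>
    not_nontrivial (AlgebraicClosure (FractionRing R) ⊗[R] M) hirr.1
  let β := Free.chooseBasis R (End R M)
  obtain ⟨c, hc⟩ := (span_baseChangeAction_eq_top_iff A M _ β).1 (hirr.span_eq_top A M _)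
  refine ⟨β.det (Algebra.lsmul R R M ∘ c), fun h => hc (by rw [h, map_zero]), fun p _ hp => ?_⟩
  let : Algebra R (AlgebraicClosure (FractionRing (R ⧸ p))) :=
    ((algebraMap (FractionRing (R ⧸ p)) (AlgebraicClosure (FractionRing (R ⧸ p)))).comp
      ((algebraMap (R ⧸ p) (FractionRing (R ⧸ p))).comp (Ideal.Quotient.mk p))).toAlgebra
  refine isIrreducibleBaseChange_of_span_eq_top A M _
    ((span_baseChangeAction_eq_top_iff A M _ β).2 ⟨c, ?_⟩)
  simpa [RingHom.algebraMap_toAlgebra, Ideal.Quotient.eq_zero_iff_mem] using hp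

end
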